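/- arXiv:1202.4184 — 6 statements merged into one kernel-verified Lean document; each statement's English description precedes it below -/
import Mathlib

section
/- For positive semidefinite matrices A and B, the operator norm of the product AB is at most the square of the operator norm of their average: ‖AB‖ ≤ ‖(A+B)/2‖². -/
/-!
For a positive operator `A` and a vector `x`, Cauchy–Schwarz for the form `⟪A ·, ·⟫` yields a
vector `s` with `A x = ⟪s, x⟫ • s` and `⟪s, z⟫² ≤ ⟪A z, z⟫` for all `z`; likewise `B y = ⟪t, y⟫ • t`.
With `τ = ‖(A + B) / 2‖` this gives `⟪s, z⟫² + ⟪t, z⟫² ≤ 2τ‖z‖²`, and testing it at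
`z = ‖t‖ • s + ‖s‖ • t` shows `‖s‖‖t‖ + ⟪s, t⟫ ≤ 2τ`, so `⟪s, t⟫‖s‖‖t‖ ≤ τ²` by AM–GM.
Hence `⟪A x, B y⟫ ≤ τ² ‖x‖ ‖y‖`, which bounds `‖A B y‖² = ⟪A (A B y), B y⟫`.
-/

open Matrix

/-- The operator (spectral) norm of a real square matrix. -/
noncomputable def opNorm {d : ℕ} (A : Matrix (Fin d) (Fin d) ℝ) : ℝ :=
  ‖Matrix.toEuclideanCLM (𝕜 := ℝ) (n := Fin d) A‖

open scoped RealInnerProductSpace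

variable {E : Type*} [NormedAddCommGroup E] [InnerProductSpace ℝ E]

theorem inner_mul_norm_mul_norm_le_sq_of_inner_sq_add_inner_sq_le {s t : E} {τ : ℝ}
    (h : ∀ z, ⟪s, z⟫ ^ 2 + ⟪t, z⟫ ^ 2 ≤ 2 * τ * ‖z‖ ^ 2) : ⟪s, t⟫ * (‖s‖ * ‖t‖) ≤ τ ^ 2 := by
  set m := ‖s‖ * ‖t‖
  set γ := ⟪s, t⟫
  rcases le_or_gt γ 0 with hγ | hγ
  · nlinarith [mul_nonneg (norm_nonneg s) (norm_nonneg t), sq_nonneg τ]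
  have hm : 0 < m := hγ.trans_le (real_inner_le_norm s t)
  have hz := h (‖t‖ • s + ‖s‖ • t)
  have hs : ⟪s, ‖t‖ • s + ‖s‖ • t⟫ = ‖s‖ * (m + γ) := by
    rw [inner_add_right, real_inner_smul_right, real_inner_smul_right, real_inner_self_eq_norm_sq]
    ring
  have ht : ⟪t, ‖t‖ • s + ‖s‖ • t⟫ = ‖t‖ * (m + γ) := by
    rw [inner_add_right, real_inner_smul_right, real_inner_smul_right, real_inner_self_eq_norm_sq,
      real_inner_comm]
    ring
  have hnorm : ‖‖t‖ • s + ‖s‖ • t‖ ^ 2 = 2 * m * (m + γ) := by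
    rw [norm_add_sq_real, norm_smul, norm_smul, real_inner_smul_left, real_inner_smul_right,
      norm_norm, norm_norm]
    ring
  rw [hs, ht, hnorm] at hz
  have hmγ : m + γ ≤ 2 * τ := by
    have h2m : 2 * m ≤ ‖s‖ ^ 2 + ‖t‖ ^ 2 := by nlinarith [sq_nonneg (‖s‖ - ‖t‖)]
    have hpos : 0 < 2 * m * (m + γ) := by positivity
    refine le_of_mul_le_mul_left ?_ hpos
    nlinarith [mul_le_mul_of_nonneg_right h2m (sq_nonneg (m + γ))]
  nlinarith [sq_nonneg (m - γ)]

namespace ContinuousLinearMap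

variable {A B : E →L[ℝ] E}

theorem IsPositive.inner_apply_sq_le (hA : A.IsPositive) (x z : E) :
    ⟪A x, z⟫ ^ 2 ≤ ⟪A x, x⟫ * ⟪A z, z⟫ := by
  have hzx : ⟪A z, x⟫ = ⟪A x, z⟫ := by
    rw [hA.inner_left_eq_inner_right, real_inner_comm]
  have hquad : ∀ l : ℝ, 0 ≤ ⟪A z, z⟫ * (l * l) + 2 * ⟪A x, z⟫ * l + ⟪A x, x⟫ := fun l => by
    have h := hA.inner_nonneg_left (x + l • z)
    simp only [map_add, map_smul, inner_add_left, inner_add_right, real_inner_smul_left,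
      real_inner_smul_right, hzx] at h
    linarith
  have hdisc := discrim_le_zero hquad
  rw [discrim] at hdisc
  linarith

theorem IsPositive.apply_eq_zero_of_inner_self_eq_zero (hA : A.IsPositive) {x : E}
    (hx : ⟪A x, x⟫ = 0) : A x = 0 := by
  have h := hA.inner_apply_sq_le x (A x)
  rw [hx, zero_mul] at h
  exact inner_self_eq_zero.mp (pow_eq_zero_iff two_ne_zero |>.mp (le_antisymm h (sq_nonneg _)))

theorem IsPositive.exists_apply_eq_inner_smul (hA : A.IsPositive) (x : E) :
    ∃ s : E, 0 ≤ ⟪s, x⟫ ∧ A x = ⟪s, x⟫ • s ∧ ∀ z, ⟪s, z⟫ ^ 2 ≤ ⟪A z, z⟫ := by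
  set a := ⟪A x, x⟫
  have ha : 0 ≤ a := hA.inner_nonneg_left x
  have hsx : ⟪(√a)⁻¹ • A x, x⟫ = √a := by
    rw [real_inner_smul_left, inv_mul_eq_div, Real.div_sqrt]
  refine ⟨(√a)⁻¹ • A x, hsx.symm ▸ Real.sqrt_nonneg a, ?_, fun z => ?_⟩
  · rcases ha.eq_or_lt with ha0 | hapos
    · rw [hA.apply_eq_zero_of_inner_self_eq_zero ha0.symm, smul_zero, smul_zero]
    · rw [hsx, smul_inv_smul₀ (Real.sqrt_pos.mpr hapos).ne']
  · calc ⟪(√a)⁻¹ • A x, z⟫ ^ 2 = a⁻¹ * ⟪A x, z⟫ ^ 2 := by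
          rw [real_inner_smul_left, mul_pow, inv_pow, Real.sq_sqrt ha]
      _ ≤ a⁻¹ * (a * ⟪A z, z⟫) := by
          gcongr
          exact hA.inner_apply_sq_le x z
      _ ≤ ⟪A z, z⟫ := by
          rw [← mul_assoc]
          exact mul_le_of_le_one_left (hA.inner_nonneg_left z) (inv_mul_le_one_of_le₀ le_rfl ha)

theorem IsPositive.inner_apply_apply_le (hA : A.IsPositive) (hB : B.IsPositive) {τ : ℝ}
    (hAB : ∀ z, ⟪A z, z⟫ + ⟪B z, z⟫ ≤ 2 * τ * ‖z‖ ^ 2) (x y : E) :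
    ⟪A x, B y⟫ ≤ τ ^ 2 * (‖x‖ * ‖y‖) := by
  obtain ⟨s, hsx, hAx, hsA⟩ := hA.exists_apply_eq_inner_smul x
  obtain ⟨t, hty, hBy, htB⟩ := hB.exists_apply_eq_inner_smul y
  have hst := inner_mul_norm_mul_norm_le_sq_of_inner_sq_add_inner_sq_le fun z =>
    (add_le_add (hsA z) (htB z)).trans (hAB z)
  rw [hAx, hBy, real_inner_smul_left, real_inner_smul_right]
  rcases le_or_gt ⟪s, t⟫ 0 with hγ | hγ
  · nlinarith [mul_nonneg hsx hty, mul_nonneg (norm_nonneg x) (norm_nonneg y), sq_nonneg τ]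
  calc ⟪s, x⟫ * (⟪t, y⟫ * ⟪s, t⟫) ≤ (‖s‖ * ‖x‖) * ((‖t‖ * ‖y‖) * ⟪s, t⟫) := by
        gcongr
        · exact real_inner_le_norm s x
        · exact real_inner_le_norm t y
    _ = ⟪s, t⟫ * (‖s‖ * ‖t‖) * (‖x‖ * ‖y‖) := by ring
    _ ≤ τ ^ 2 * (‖x‖ * ‖y‖) := by gcongr

theorem IsPositive.norm_mul_le_sq (hA : A.IsPositive) (hB : B.IsPositive) {τ : ℝ}
    (hAB : ∀ z, ⟪A z, z⟫ + ⟪B z, z⟫ ≤ 2 * τ * ‖z‖ ^ 2) : ‖A * B‖ ≤ τ ^ 2 := by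
  refine opNorm_le_bound _ (sq_nonneg τ) fun y => ?_
  change ‖A (B y)‖ ≤ _
  set w := A (B y)
  have hw : ‖w‖ * ‖w‖ ≤ ‖w‖ * (τ ^ 2 * ‖y‖) := by
    calc ‖w‖ * ‖w‖ = ⟪A w, B y⟫ := by
          rw [← real_inner_self_eq_norm_mul_norm, hA.inner_left_eq_inner_right, real_inner_comm]
      _ ≤ τ ^ 2 * (‖w‖ * ‖y‖) := hA.inner_apply_apply_le hB hAB w y
      _ = ‖w‖ * (τ ^ 2 * ‖y‖) := by ring
  rcases (norm_nonneg w).eq_or_lt with hw0 | hwpos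
  · rw [← hw0]
    positivity
  · exact le_of_mul_le_mul_left hw hwpos

theorem IsPositive.norm_mul_le_sq_norm_half_smul_add (hA : A.IsPositive) (hB : B.IsPositive) :
    ‖A * B‖ ≤ ‖(2 : ℝ)⁻¹ • (A + B)‖ ^ 2 := by
  refine hA.norm_mul_le_sq hB fun z => ?_
  set M := (2 : ℝ)⁻¹ • (A + B)
  calc ⟪A z, z⟫ + ⟪B z, z⟫ = 2 * ⟪M z, z⟫ := by
        simp only [M, _root_.smul_apply, _root_.add_apply, real_inner_smul_left, inner_add_left]
        ring
    _ ≤ 2 * (‖M z‖ * ‖z‖) := by gcongr; exact real_inner_le_norm _ _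
    _ ≤ 2 * (‖M‖ * ‖z‖ * ‖z‖) := by gcongr; exact M.le_opNorm z
    _ = 2 * ‖M‖ * ‖z‖ ^ 2 := by ring

end ContinuousLinearMap

open scoped ComplexOrder in
theorem Matrix.PosSemidef.isPositive_toEuclideanCLM {𝕜 n : Type*} [RCLike 𝕜] [Fintype n]
    [DecidableEq n] {A : Matrix n n 𝕜} (hA : A.PosSemidef) :
    (toEuclideanCLM (𝕜 := 𝕜) (n := n) A).IsPositive := by
  rw [← ContinuousLinearMap.isPositive_toLinearMap_iff, coe_toEuclideanCLM_eq_toEuclideanLin]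
  exact isPositive_toEuclideanLin_iff.mpr hA

/-- For positive semidefinite matrices `A` and `B`, `‖A * B‖ ≤ ‖(A + B) / 2‖ ^ 2`
in the operator norm. -/
theorem opNorm_mul_le_sq_opNorm_avg {d : ℕ} (A B : Matrix (Fin d) (Fin d) ℝ)
    (hA : A.PosSemidef) (hB : B.PosSemidef) :
    opNorm (A * B) ≤ opNorm ((2 : ℝ)⁻¹ • (A + B)) ^ 2 := by
  simpa only [opNorm, map_mul, map_smul, map_add] using
    hA.isPositive_toEuclideanCLM.norm_mul_le_sq_norm_half_smul_add hB.isPositive_toEuclideanCLM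
end

section
/- For positive semidefinite matrices A and B, the matrix (1/4)A⁴ + (1/4)AB²A + (1/4)BA²B + (1/4)B⁴ − ((A+B)/2)⁴ is positive semidefinite. -/
/-!
The difference is a sum of two congruences of positive semidefinite matrices:
`8⁻¹ (A - B)(A² + B²)(A - B) + 16⁻¹ (A + B)(A - B)²(A + B)`, an identity valid in any
(noncommutative) algebra. Since `A ± B` are Hermitian, both terms are positive semidefinite.
-/

open Matrix

theorem wr_sub_am_pow_four_eq {𝕜 R : Type*} [Field 𝕜] [CharZero 𝕜] [Ring R] [Algebra 𝕜 R]
    (A B : R) :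
    (4 : 𝕜)⁻¹ • A ^ 4 + (4 : 𝕜)⁻¹ • (A * B ^ 2 * A) + (4 : 𝕜)⁻¹ • (B * A ^ 2 * B)
      + (4 : 𝕜)⁻¹ • B ^ 4 - ((2 : 𝕜)⁻¹ • (A + B)) ^ 4
      = (8 : 𝕜)⁻¹ • ((A - B) * (A ^ 2 + B ^ 2) * (A - B))
        + (16 : 𝕜)⁻¹ • ((A + B) * (A - B) ^ 2 * (A + B)) := by
  rw [smul_pow]
  simp only [pow_succ, pow_zero, one_mul, mul_sub, sub_mul, mul_add, add_mul, mul_assoc]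
  module

namespace Matrix

variable {n R : Type*} [Fintype n] [CommRing R] [PartialOrder R] [StarRing R]

theorem PosSemidef.mul_mul_same_of_isHermitian {M X : Matrix n n R} (hM : M.PosSemidef)
    (hX : X.IsHermitian) : (X * M * X).PosSemidef := by
  simpa only [hX.eq] using hM.conjTranspose_mul_mul_same X

theorem IsHermitian.posSemidef_sq [StarOrderedRing R] [DecidableEq n] {X : Matrix n n R}
    (hX : X.IsHermitian) : (X ^ 2).PosSemidef := by
  simpa only [hX.eq, sq] using posSemidef_conjTranspose_mul_self X

end Matrix

/-- For positive semidefinite matrices `A` and `B`, the matrix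
`(1/4)A⁴ + (1/4)AB²A + (1/4)BA²B + (1/4)B⁴ − ((A+B)/2)⁴` is positive semidefinite. -/
theorem posSemidef_wr_minus_am_pow_four {d : ℕ} (A B : Matrix (Fin d) (Fin d) ℝ)
    (hA : A.PosSemidef) (hB : B.PosSemidef) :
    ((4 : ℝ)⁻¹ • A ^ 4 + (4 : ℝ)⁻¹ • (A * B ^ 2 * A) + (4 : ℝ)⁻¹ • (B * A ^ 2 * B)
      + (4 : ℝ)⁻¹ • B ^ 4 - ((2 : ℝ)⁻¹ • (A + B)) ^ 4).PosSemidef := by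
  rw [wr_sub_am_pow_four_eq]
  have hDiff : (A - B).IsHermitian := hA.isHermitian.sub hB.isHermitian
  have hSum : (A + B).IsHermitian := hA.isHermitian.add hB.isHermitian
  have hFirst := ((hA.pow 2).add (hB.pow 2)).mul_mul_same_of_isHermitian hDiff
  have hSecond := hDiff.posSemidef_sq.mul_mul_same_of_isHermitian hSum
  exact (hFirst.smul (by norm_num)).add (hSecond.smul (by norm_num))
end

section
/- Maclaurin's inequality: for positive reals x₁,…,xₙ, letting s_k be the k-th elementary symmetric polynomial divided by C(n,k), the sequence s₁ ≥ s₂^{1/2} ≥ … ≥ sₙ^{1/n} is nonincreasing; in particular s₁ ≥ sₙ^{1/n} is the AM-GM inequality. -/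
/-!
Newton's inequalities `E k * E (k + 2) ≤ E (k + 1) ^ 2` for the normalized elementary symmetric
means `E` of positive reals follow by induction on the number of variables: adjoining a variable
`a` to `M` others changes the means by `(M + 1) E' k = (M + 1 - k) E k + k a E (k - 1)`, and the
Newton defect of `E'` is then a nonnegative combination of Newton defects of `E` plus a square.
A positive log-concave sequence with `E 0 = 1` has `k ↦ E k ^ (1 / k)` nonincreasing.
-/

open Finset

namespace Multiset

variable {R : Type*} [CommSemiring R]

@[simp]
theorem esymm_zero (m : Multiset R) : m.esymm 0 = 1 := by
  simp [esymm, powersetCard_zero_left]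

theorem esymm_eq_zero_of_card_lt {m : Multiset R} {k : ℕ} (h : card m < k) : m.esymm k = 0 := by
  simp [esymm, powersetCard_eq_empty _ h]

theorem esymm_cons_succ (a : R) (m : Multiset R) (k : ℕ) :
    (a ::ₘ m).esymm (k + 1) = m.esymm (k + 1) + a * m.esymm k := by
  simp [esymm, powersetCard_cons, map_map, sum_map_mul_left]

theorem esymm_nonneg [PartialOrder R] [IsOrderedRing R] {m : Multiset R} (hm : ∀ a ∈ m, 0 ≤ a)
    (k : ℕ) : 0 ≤ m.esymm k :=
  sum_nonneg fun _ hp ↦ by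
    obtain ⟨t, ht, rfl⟩ := mem_map.1 hp
    exact prod_nonneg fun a ha ↦ hm a (mem_of_le (mem_powersetCard.1 ht).1 ha)

theorem esymm_pos [PartialOrder R] [IsStrictOrderedRing R] {m : Multiset R} (hm : ∀ a ∈ m, 0 < a)
    {k : ℕ} (hk : k ≤ card m) :
    0 < m.esymm k := by
  induction m using Multiset.induction_on generalizing k with
  | empty => simp_all
  | cons a m ih =>
    have hm' : ∀ b ∈ m, 0 < b := fun b hb ↦ hm b (mem_cons_of_mem hb)
    rcases k with _ | k
    · simp
    rw [esymm_cons_succ]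
    have := esymm_nonneg (fun b hb ↦ (hm' b hb).le) (k + 1)
    have := ih hm' (k := k) (by simpa using hk)
    have := hm a (mem_cons_self a m)
    positivity

noncomputable def esymmMean (m : Multiset ℝ) (k : ℕ) : ℝ :=
  ((card m).choose k : ℝ)⁻¹ * m.esymm k

@[simp]
theorem esymmMean_zero (m : Multiset ℝ) : m.esymmMean 0 = 1 := by
  simp [esymmMean]

theorem esymmMean_eq_zero_of_card_lt {m : Multiset ℝ} {k : ℕ} (h : card m < k) :
    m.esymmMean k = 0 := by
  simp [esymmMean, esymm_eq_zero_of_card_lt h]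

theorem esymmMean_pos {m : Multiset ℝ} (hm : ∀ a ∈ m, 0 < a) {k : ℕ} (hk : k ≤ card m) :
    0 < m.esymmMean k :=
  mul_pos (by simpa using Nat.choose_pos hk) (esymm_pos hm hk)

theorem esymmMean_nonneg {m : Multiset ℝ} (hm : ∀ a ∈ m, 0 ≤ a) (k : ℕ) :
    0 ≤ m.esymmMean k :=
  mul_nonneg (by positivity) (esymm_nonneg hm k)

theorem esymm_eq_choose_mul_esymmMean (m : Multiset ℝ) (k : ℕ) :
    m.esymm k = (card m).choose k * m.esymmMean k := by
  rcases lt_or_ge (card m) k with hk | hk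
  · simp [esymm_eq_zero_of_card_lt hk, Nat.choose_eq_zero_of_lt hk]
  · have : ((card m).choose k : ℝ) ≠ 0 := by simpa using (Nat.choose_pos hk).ne'
    simp [esymmMean, this]

theorem esymmMean_cons (a : ℝ) (m : Multiset ℝ) (k : ℕ) :
    (card m + 1 : ℝ) * (a ::ₘ m).esymmMean k =
      (card m + 1 - k) * m.esymmMean k + k * a * m.esymmMean (k - 1) := by
  rcases k with _ | k
  · simp
  rcases lt_or_ge (card m) k with hk | hk
  · simp [esymmMean_eq_zero_of_card_lt, hk, hk.trans (Nat.lt_succ_self k)]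
  have hC : ((card m).choose k : ℝ) ≠ 0 := by simpa using (Nat.choose_pos hk).ne'
  have hrec := esymm_cons_succ a m k
  simp only [esymm_eq_choose_mul_esymmMean, card_cons] at hrec
  have hpascal₁ : ((card m + 1).choose (k + 1) * (k + 1) : ℝ) =
      (card m + 1) * (card m).choose k := by
    exact_mod_cast (Nat.add_one_mul_choose_eq (card m) k).symm
  have hpascal₂ :
      ((card m).choose (k + 1) * (k + 1) : ℝ) = (card m).choose k * (card m - k) := by
    rw [← Nat.cast_sub hk]
    exact_mod_cast Nat.choose_succ_right_eq (card m) k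
  apply mul_left_cancel₀ hC
  push_cast
  linear_combination (↑k + 1) * hrec - (a ::ₘ m).esymmMean (k + 1) * hpascal₁ +
    m.esymmMean (k + 1) * hpascal₂

/-- With `bᵢ = E (k - 1 + i)` for the means `E` of `M` variables, the three factors are
`(M + 1)` times the means of one more variable `a` at `k`, `k + 2` and `k + 1`. -/
theorem mul_le_sq_of_newton_recurrence {M k a b₀ b₁ b₂ b₃ : ℝ} (hk : 0 ≤ k) (hkM : k + 1 ≤ M)
    (ha : 0 ≤ a) (hb₁ : 0 < b₁) (hb₂ : 0 < b₂) (hb₃ : 0 ≤ b₃) (h₀ : k * (b₀ * b₂) ≤ k * b₁ ^ 2)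
    (h₁ : b₁ * b₃ ≤ b₂ ^ 2) :
    ((M + 1 - k) * b₁ + k * a * b₀) * ((M + 1 - (k + 2)) * b₃ + (k + 2) * a * b₂) ≤
      ((M + 1 - (k + 1)) * b₂ + (k + 1) * a * b₁) ^ 2 := by
  have h₂ : k * (b₀ * b₃) ≤ k * (b₁ * b₂) := by
    refine le_of_mul_le_mul_right ?_ (mul_pos hb₁ hb₂)
    nlinarith [mul_le_mul h₀ h₁ (by positivity) (by positivity)]
  obtain ⟨q, hq, rfl⟩ : ∃ q, 0 ≤ q ∧ M = q + k + 1 := ⟨M - k - 1, by linarith, by ring⟩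
  have := sub_nonneg.2 h₀
  have := sub_nonneg.2 h₁
  have := sub_nonneg.2 h₂
  rw [← sub_nonneg]
  calc 0 ≤ (k + 2) * a ^ 2 * (k * b₁ ^ 2 - k * (b₀ * b₂)) + q * (q + 2) * (b₂ ^ 2 - b₁ * b₃) +
        a * q * (k * (b₁ * b₂) - k * (b₀ * b₃)) + (a * b₁ - b₂) ^ 2 := by positivity
    _ = _ := by ring

theorem esymmMean_mul_le_sq {m : Multiset ℝ} (hm : ∀ a ∈ m, 0 < a) (k : ℕ) :
    m.esymmMean k * m.esymmMean (k + 2) ≤ m.esymmMean (k + 1) ^ 2 := by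
  induction m using Multiset.induction_on generalizing k with
  | empty =>
    rw [esymmMean_eq_zero_of_card_lt (k := k + 2) (by simp), mul_zero]
    positivity
  | cons a m ih =>
    have hm' : ∀ b ∈ m, 0 < b := fun b hb ↦ hm b (mem_cons_of_mem hb)
    rcases lt_or_ge (card m) (k + 1) with hk | hk
    · rw [esymmMean_eq_zero_of_card_lt (k := k + 2) (by simp; omega), mul_zero]
      positivity
    have h₀ :
        (k : ℝ) * (m.esymmMean (k - 1) * m.esymmMean (k + 1)) ≤ k * m.esymmMean k ^ 2 := by
      rcases k with _ | k
      · simp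
      exact mul_le_mul_of_nonneg_left (ih hm' k) (by positivity)
    have hcons := mul_le_sq_of_newton_recurrence (M := card m) (Nat.cast_nonneg k)
      (by exact_mod_cast hk) (hm a (mem_cons_self a m)).le (esymmMean_pos hm' (by omega))
      (esymmMean_pos hm' hk) (esymmMean_nonneg (fun b hb ↦ (hm' b hb).le) _) h₀ (ih hm' k)
    have e₁ := esymmMean_cons a m (k + 1)
    have e₂ := esymmMean_cons a m (k + 2)
    simp only [Nat.add_sub_cancel] at e₁ e₂
    push_cast at e₁ e₂
    rw [← esymmMean_cons, ← e₁, ← e₂] at hcons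
    refine le_of_mul_le_mul_left ?_ (by positivity : (0 : ℝ) < (card m + 1) ^ 2)
    linear_combination hcons

end Multiset

theorem Real.rpow_inv_natCast_le_of_pow_le_pow {a b : ℝ} {k l : ℕ} (ha : 0 ≤ a) (hb : 0 ≤ b)
    (hk : k ≠ 0) (hl : l ≠ 0) (h : a ^ k ≤ b ^ l) : a ^ (l : ℝ)⁻¹ ≤ b ^ (k : ℝ)⁻¹ := by
  have root_pow {c : ℝ} (hc : 0 ≤ c) {i j : ℕ} (hi : i ≠ 0) (hj : j ≠ 0) :
      c ^ (i : ℝ)⁻¹ = (c ^ j) ^ ((j * i : ℕ) : ℝ)⁻¹ := by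
    rw [← Real.rpow_natCast, ← Real.rpow_mul hc]
    congr 1
    push_cast
    field_simp
  rw [root_pow ha hl hk, root_pow hb hk hl, Nat.mul_comm]
  exact Real.rpow_le_rpow (by positivity) h (by positivity)

section LogConcave

variable {a : ℕ → ℝ} {N : ℕ}

theorem pow_succ_le_pow_of_mul_le_sq (h₀ : a 0 = 1) (hpos : ∀ k ≤ N, 0 < a k)
    (hnewton : ∀ k, k + 2 ≤ N → a k * a (k + 2) ≤ a (k + 1) ^ 2) :
    ∀ k, k + 1 ≤ N → a (k + 1) ^ k ≤ a k ^ (k + 1) := by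
  intro k
  induction k with
  | zero => simp [h₀]
  | succ k ih =>
    intro hk
    have hak := hpos k (by omega)
    have hak₁ := hpos (k + 1) (by omega)
    have hak₂ := hpos (k + 2) (by omega)
    refine le_of_mul_le_mul_right ?_ (pow_pos hak (k + 1))
    calc a (k + 2) ^ (k + 1) * a k ^ (k + 1) = (a k * a (k + 2)) ^ (k + 1) := by ring
      _ ≤ (a (k + 1) ^ 2) ^ (k + 1) := by gcongr; exact hnewton k hk
      _ = a (k + 1) ^ (k + 2) * a (k + 1) ^ k := by ring
      _ ≤ a (k + 1) ^ (k + 2) * a k ^ (k + 1) := by gcongr; exact ih (by omega)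

theorem antitoneOn_rpow_inv_of_mul_le_sq (h₀ : a 0 = 1) (hpos : ∀ k ≤ N, 0 < a k)
    (hnewton : ∀ k, k + 2 ≤ N → a k * a (k + 2) ≤ a (k + 1) ^ 2) :
    AntitoneOn (fun k ↦ a k ^ (k : ℝ)⁻¹) (Set.Icc 1 N) :=
  antitoneOn_of_add_one_le Set.ordConnected_Icc fun k _ hk hk₁ ↦
    Real.rpow_inv_natCast_le_of_pow_le_pow (hpos _ hk₁.2).le (hpos _ hk.2).le
      (Nat.one_le_iff_ne_zero.1 hk.1) k.succ_ne_zero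
      (pow_succ_le_pow_of_mul_le_sq h₀ hpos hnewton k hk₁.2)

end LogConcave

/-- Maclaurin's inequalities: for positive reals `x₁, …, xₙ`, with
`s k = (1/C(n,k)) Σ_{|Ω|=k} ∏_{i∈Ω} xᵢ`, the sequence `k ↦ s k ^ (1/k)` is
nonincreasing for `1 ≤ k ≤ n`. -/
theorem maclaurin_inequalities (n : ℕ) (x : Fin n → ℝ) (hx : ∀ i, 0 < x i)
    (s : ℕ → ℝ)
    (hs : ∀ k, s k = ((n.choose k : ℝ))⁻¹ *
      ∑ Ω ∈ Finset.univ.powersetCard k, ∏ i ∈ Ω, x i) :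
    ∀ k l : ℕ, 1 ≤ k → k ≤ l → l ≤ n →
      (s l) ^ ((l : ℝ)⁻¹) ≤ (s k) ^ ((k : ℝ)⁻¹) := by
  set m : Multiset ℝ := (Finset.univ : Finset (Fin n)).val.map x
  have hm : ∀ a ∈ m, 0 < a := by simp [m, hx]
  have hcard : Multiset.card m = n := by simp [m]
  have hs_mean : s = m.esymmMean := by
    ext k
    rw [hs, Multiset.esymmMean, Finset.esymm_map_val, hcard]
  intro k l hk hkl hln
  rw [hs_mean]
  refine antitoneOn_rpow_inv_of_mul_le_sq (N := n) m.esymmMean_zero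
    (fun k hk ↦ Multiset.esymmMean_pos hm (hcard ▸ hk))
    (fun k _ ↦ Multiset.esymmMean_mul_le_sq hm k)
    ⟨hk, hkl.trans hln⟩ ⟨hk.trans hkl, hln⟩ hkl
end

section
/- For positive reals a₁,…,aₙ and any k ≤ n, the average of products over k-subsets satisfies (1/C(n,k)) Σ_{|Ω|=k} ∏_{i∈Ω} a_i ≤ ((1/n) Σᵢ aᵢ)^k. -/
/-!
Write `e_k` for the sum of `∏_{i ∈ T} aᵢ` over the `k`-subsets `T` of an `n`-set and `S = ∑ aᵢ`.
Since `(k + 1) C(n, k + 1) = (n - k) C(n, k)`, the bound `n ^ k e_k ≤ C(n, k) S ^ k` follows by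
induction from the one-step bound `(k + 1) n e_{k+1} ≤ (n - k) S e_k`. Counting subsets with a
marked element gives `(k + 1) e_{k+1} = ∑_T ∏_T a · ∑_{j ∉ T} aⱼ`, which reduces the step to a
positive correlation between `∏_T a` and `∑_T a` over `k`-subsets. Writing each `k`-subset with a
marked element as `insert i R`, the correlation becomes `∑_R ∏_R a · ∑_{i, j ∉ R} aᵢ (aᵢ - aⱼ) ≥ 0`,
and every inner sum is nonnegative by Cauchy–Schwarz.
-/

open Finset

section PointedSubsets

variable {ι : Type*} [DecidableEq ι]

theorem sum_powersetCard_succ_sum_mem {M : Type*} [AddCommMonoid M] (s : Finset ι) (k : ℕ)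
    (f : Finset ι → ι → M) :
    ∑ U ∈ s.powersetCard (k + 1), ∑ j ∈ U, f U j =
      ∑ T ∈ s.powersetCard k, ∑ j ∈ s \ T, f (insert j T) j := by
  rw [sum_sigma', sum_sigma']
  refine sum_nbij' (fun p => ⟨p.1.erase p.2, p.2⟩) (fun p => ⟨insert p.2 p.1, p.2⟩)
    ?_ ?_ ?_ ?_ ?_
  · rintro ⟨U, j⟩ hp
    simp only [mem_sigma, mem_powersetCard] at hp ⊢
    obtain ⟨⟨hUs, hU⟩, hj⟩ := hp
    refine ⟨⟨(erase_subset j U).trans hUs, by rw [card_erase_of_mem hj, hU]; rfl⟩, ?_⟩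
    simp [hUs hj]
  · rintro ⟨T, j⟩ hp
    simp only [mem_sigma, mem_powersetCard, mem_sdiff] at hp ⊢
    obtain ⟨⟨hTs, hT⟩, hjs, hjT⟩ := hp
    exact ⟨⟨insert_subset hjs hTs, by rw [card_insert_of_notMem hjT, hT]⟩, mem_insert_self j T⟩
  · rintro ⟨U, j⟩ hp
    simp only [mem_sigma] at hp
    simp [insert_erase hp.2]
  · rintro ⟨T, j⟩ hp
    simp only [mem_sigma, mem_sdiff] at hp
    simp [erase_insert hp.2.2]
  · rintro ⟨U, j⟩ hp
    simp only [mem_sigma] at hp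
    simp [insert_erase hp.2]

theorem succ_mul_sum_powersetCard_succ_prod {R : Type*} [CommSemiring R] (s : Finset ι)
    (a : ι → R) (k : ℕ) :
    (k + 1 : R) * ∑ U ∈ s.powersetCard (k + 1), ∏ i ∈ U, a i =
      ∑ T ∈ s.powersetCard k, (∏ i ∈ T, a i) * ∑ j ∈ s \ T, a j :=
  calc (k + 1 : R) * ∑ U ∈ s.powersetCard (k + 1), ∏ i ∈ U, a i
      = ∑ U ∈ s.powersetCard (k + 1), ∑ j ∈ U, ∏ i ∈ U, a i := by
        rw [mul_sum]
        refine sum_congr rfl fun U hU => ?_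
        rw [sum_const, (mem_powersetCard.1 hU).2, nsmul_eq_mul, Nat.cast_succ]
    _ = ∑ T ∈ s.powersetCard k, ∑ j ∈ s \ T, ∏ i ∈ insert j T, a i :=
        sum_powersetCard_succ_sum_mem s k _
    _ = ∑ T ∈ s.powersetCard k, (∏ i ∈ T, a i) * ∑ j ∈ s \ T, a j := by
        refine sum_congr rfl fun T _ => ?_
        rw [mul_sum]
        refine sum_congr rfl fun j hj => ?_
        rw [prod_insert (mem_sdiff.1 hj).2, mul_comm]

end PointedSubsets

section OrderedRing

variable {ι R : Type*} [CommRing R] [LinearOrder R] [IsStrictOrderedRing R]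

theorem sum_sum_mul_sub_nonneg (u : Finset ι) (a : ι → R) :
    0 ≤ ∑ i ∈ u, ∑ j ∈ u, a i * (a i - a j) := by
  have h : ∑ i ∈ u, ∑ j ∈ u, a i * (a i - a j) = #u * ∑ i ∈ u, a i ^ 2 - (∑ i ∈ u, a i) ^ 2 := by
    simp only [mul_sub, sum_sub_distrib, sum_const, nsmul_eq_mul, ← mul_sum, ← sum_mul, sq]
  rw [h, sub_nonneg]
  exact sq_sum_le_card_mul_sum_sq

variable [DecidableEq ι] (s : Finset ι) {a : ι → R}

theorem card_mul_sum_powersetCard_prod_mul_sum_sdiff_le (ha : ∀ i ∈ s, 0 ≤ a i) (k : ℕ) :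
    (k : R) * ∑ T ∈ s.powersetCard k, (∏ i ∈ T, a i) * ∑ j ∈ s \ T, a j ≤
      ((#s - k : ℕ) : R) * ∑ T ∈ s.powersetCard k, (∏ i ∈ T, a i) * ∑ i ∈ T, a i := by
  rw [← sub_nonneg]
  have h : ((#s - k : ℕ) : R) * ∑ T ∈ s.powersetCard k, (∏ i ∈ T, a i) * ∑ i ∈ T, a i -
        (k : R) * ∑ T ∈ s.powersetCard k, (∏ i ∈ T, a i) * ∑ j ∈ s \ T, a j =
      ∑ T ∈ s.powersetCard k, ∑ i ∈ T, ∑ j ∈ s \ T, (∏ l ∈ T, a l) * (a i - a j) := by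
    rw [mul_sum, mul_sum, ← sum_sub_distrib]
    refine sum_congr rfl fun T hT => ?_
    obtain ⟨hTs, hT⟩ := mem_powersetCard.1 hT
    simp only [mul_sub, sum_sub_distrib, sum_const, card_sdiff_of_subset hTs, hT, nsmul_eq_mul,
      ← mul_sum]
  rw [h]
  cases k with
  | zero => simp
  | succ k =>
    rw [sum_powersetCard_succ_sum_mem]
    refine sum_nonneg fun T hT => ?_
    have hpair : ∑ i ∈ s \ T, ∑ j ∈ s \ insert i T, (∏ l ∈ insert i T, a l) * (a i - a j) =
        (∏ l ∈ T, a l) * ∑ i ∈ s \ T, ∑ j ∈ s \ T, a i * (a i - a j) := by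
      rw [mul_sum]
      refine sum_congr rfl fun i hi => ?_
      rw [sdiff_insert, sum_erase _ (by simp), prod_insert (mem_sdiff.1 hi).2, mul_sum]
      refine sum_congr rfl fun j _ => ?_
      ring
    rw [hpair]
    exact mul_nonneg (prod_nonneg fun l hl => ha l ((mem_powersetCard.1 hT).1 hl))
      (sum_sum_mul_sub_nonneg _ a)

theorem succ_mul_card_mul_sum_powersetCard_succ_prod_le (ha : ∀ i ∈ s, 0 ≤ a i) {k : ℕ}
    (hk : k ≤ #s) :
    (k + 1 : R) * #s * ∑ U ∈ s.powersetCard (k + 1), ∏ i ∈ U, a i ≤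
      ((#s - k : ℕ) : R) * (∑ i ∈ s, a i) * ∑ T ∈ s.powersetCard k, ∏ i ∈ T, a i := by
  set X := ∑ T ∈ s.powersetCard k, (∏ i ∈ T, a i) * ∑ j ∈ s \ T, a j
  set Y := ∑ T ∈ s.powersetCard k, (∏ i ∈ T, a i) * ∑ i ∈ T, a i
  have hX : (k + 1 : R) * ∑ U ∈ s.powersetCard (k + 1), ∏ i ∈ U, a i = X :=
    succ_mul_sum_powersetCard_succ_prod s a k
  have hXY : (∑ i ∈ s, a i) * ∑ T ∈ s.powersetCard k, ∏ i ∈ T, a i = X + Y := by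
    rw [mul_sum, ← sum_add_distrib]
    refine sum_congr rfl fun T hT => ?_
    rw [← mul_add, ← sum_sdiff (mem_powersetCard.1 hT).1, mul_comm]
  have hcard : (#s : R) = ((#s - k : ℕ) : R) + k := by
    rw [Nat.cast_sub hk, sub_add_cancel]
  have hcorr := card_mul_sum_powersetCard_prod_mul_sum_sdiff_le s ha k
  calc (k + 1 : R) * #s * ∑ U ∈ s.powersetCard (k + 1), ∏ i ∈ U, a i
      = (((#s - k : ℕ) : R) + k) * X := by rw [← hcard, ← hX]; ring
    _ ≤ ((#s - k : ℕ) : R) * (X + Y) := by linarith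
    _ = ((#s - k : ℕ) : R) * (∑ i ∈ s, a i) * ∑ T ∈ s.powersetCard k, ∏ i ∈ T, a i := by
      rw [mul_assoc, hXY]

theorem card_pow_mul_sum_powersetCard_prod_le (ha : ∀ i ∈ s, 0 ≤ a i) {k : ℕ} (hk : k ≤ #s) :
    (#s : R) ^ k * ∑ T ∈ s.powersetCard k, ∏ i ∈ T, a i ≤ (#s).choose k * (∑ i ∈ s, a i) ^ k := by
  induction k with
  | zero => simp
  | succ k ih =>
    specialize ih (by omega)
    have hstep := succ_mul_card_mul_sum_powersetCard_succ_prod_le s ha (k := k) (by omega)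
    have hchoose : ((#s).choose (k + 1) : R) * (k + 1) = (#s).choose k * ((#s - k : ℕ) : R) := by
      exact_mod_cast Nat.choose_succ_right_eq #s k
    have hS : 0 ≤ ∑ i ∈ s, a i := sum_nonneg ha
    refine le_of_mul_le_mul_right ?_ (k.cast_add_one_pos : (0 : R) < k + 1)
    calc (#s : R) ^ (k + 1) * (∑ U ∈ s.powersetCard (k + 1), ∏ i ∈ U, a i) * (k + 1)
        = (#s : R) ^ k * ((k + 1) * #s * ∑ U ∈ s.powersetCard (k + 1), ∏ i ∈ U, a i) := by ring
      _ ≤ (#s : R) ^ k * (((#s - k : ℕ) : R) * (∑ i ∈ s, a i) *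
            ∑ T ∈ s.powersetCard k, ∏ i ∈ T, a i) := by gcongr
      _ = ((#s - k : ℕ) : R) * (∑ i ∈ s, a i) *
            ((#s : R) ^ k * ∑ T ∈ s.powersetCard k, ∏ i ∈ T, a i) := by ring
      _ ≤ ((#s - k : ℕ) : R) * (∑ i ∈ s, a i) * ((#s).choose k * (∑ i ∈ s, a i) ^ k) := by gcongr
      _ = (#s).choose (k + 1) * (∑ i ∈ s, a i) ^ (k + 1) * (k + 1) := by
        linear_combination (-(∑ i ∈ s, a i) ^ (k + 1)) * hchoose

end OrderedRing

/-- For nonnegative reals `a₁, …, aₙ` and `k ≤ n`, the average of products over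
`k`-subsets is at most the `k`-th power of the arithmetic mean:
`(1/C(n,k)) Σ_{|Ω|=k} ∏_{i∈Ω} aᵢ ≤ ((1/n) Σᵢ aᵢ) ^ k`. -/
theorem avg_subset_prod_le_pow_mean (n k : ℕ) (hk : k ≤ n) (a : Fin n → ℝ)
    (ha : ∀ i, 0 ≤ a i) :
    ((n.choose k : ℝ))⁻¹ * ∑ Ω ∈ Finset.univ.powersetCard k, ∏ i ∈ Ω, a i ≤
      ((n : ℝ)⁻¹ * ∑ i, a i) ^ k := by
  have hmain := card_pow_mul_sum_powersetCard_prod_le univ (fun i _ => ha i) (k := k)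
    (by simpa using hk)
  rw [card_univ, Fintype.card_fin] at hmain
  have hC : (0 : ℝ) < n.choose k := by exact_mod_cast Nat.choose_pos hk
  have hn : (0 : ℝ) < (n : ℝ) ^ k := by
    rcases n.eq_zero_or_pos with rfl | hn
    · simp [Nat.le_zero.mp hk]
    · positivity
  rw [inv_mul_le_iff₀ hC, mul_pow, inv_pow, mul_left_comm, le_inv_mul_iff₀ hn]
  exact hmain
end

section
/- If A₁,…,Aₙ are simultaneously diagonalizable positive semidefinite matrices (pairwise commuting), then the operator norm of the without-replacement average of products of k distinct matrices is at most the operator norm of ((1/n)ΣᵢAᵢ)^k. -/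
open Matrix Finset

/-!
The `Aᵢ` generate a commutative subalgebra of matrices on which the Loewner order is a ring
order, since commuting positive semidefinite matrices have a positive semidefinite product. So it
suffices to prove, in an ordered commutative ring, the Maclaurin-type inequality
`nᵏ Pₖ ≤ n!/(n-k)! · sᵏ`, where `s = ∑ aᵢ` and `Pₖ` is the sum of `∏ a (e i)` over injective
`e : Fin k → Fin n`. Writing `Rₖ` for the sum of `a (g 0) * ∏ a (g i)` over injective
`g : Fin (k+1) → Fin n`, splitting `s` into the unused and the used indices of each tuple gives
`s Pₖ₊₁ = Pₖ₊₂ + (k+1) Rₖ`, while Cauchy–Schwarz over the unused indices gives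
`Pₖ₊₂ ≤ (n-k-1) Rₖ`. Together they give `n Pₖ₊₁ ≤ (n-k) s Pₖ`, which iterates.
Finally, `0 ≤ X ≤ Y` in the Loewner order implies `‖X‖ ≤ ‖Y‖` through Rayleigh quotients.
-/

theorem Fin.univ_image_cons {ι : Type*} [DecidableEq ι] {k : ℕ} (b : ι) (f : Fin k → ι) :
    univ.image (Fin.cons b f : Fin (k + 1) → ι) = insert b (univ.image f) := by
  ext; simp [Fin.exists_fin_succ, eq_comm]

theorem Fintype.sum_embedding_fin_succ {ι M : Type*} [Fintype ι] [DecidableEq ι]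
    [AddCommMonoid M] {k : ℕ} (F : (Fin (k + 1) → ι) → M) :
    ∑ g : Fin (k + 1) ↪ ι, F g = ∑ h : Fin k ↪ ι, ∑ b ∈ (univ.image h)ᶜ, F (Fin.cons b h) := by
  rw [← (Equiv.embeddingFinSucc k ι).symm.sum_comp, Fintype.sum_sigma]
  refine Fintype.sum_congr _ _ fun h => ?_
  simp only [Equiv.coe_embeddingFinSucc_symm]
  symm; apply Finset.sum_subtype; simp

theorem Finset.sum_filter_injective {α β M : Type*} [Fintype α] [DecidableEq α] [Fintype β]
    [DecidableEq β] [AddCommMonoid M] (f : (α → β) → M) :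
    ∑ j ∈ univ.filter (fun j : α → β => Function.Injective j), f j = ∑ e : α ↪ β, f e := by
  rw [Finset.sum_subtype _ (p := Function.Injective) (by simp) f]
  exact Fintype.sum_equiv (Equiv.subtypeInjectiveEquivEmbedding α β) _ _ fun _ => rfl

/-- Squares need not be nonnegative in a partially ordered ring (e.g. `ℂ` with its star order). -/
theorem sq_sum_le_card_nsmul_sum_sq {R ι : Type*} [CommRing R] [PartialOrder R] [IsOrderedRing R]
    (s : Finset ι) (f : ι → R) (hf : ∀ i ∈ s, ∀ j ∈ s, 0 ≤ (f i - f j) ^ 2) :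
    (∑ i ∈ s, f i) ^ 2 ≤ #s • ∑ i ∈ s, f i ^ 2 := by
  classical
  induction s using Finset.induction_on with
  | empty => simp
  | insert x s hx ih =>
    have hs := ih fun i hi j hj => hf i (mem_insert_of_mem hi) j (mem_insert_of_mem hj)
    have hcross : 2 * f x * ∑ i ∈ s, f i ≤ #s • f x ^ 2 + ∑ i ∈ s, f i ^ 2 := by
      rw [mul_sum, ← sum_const, ← sum_add_distrib]
      exact sum_le_sum fun i hi => sub_nonneg.mp <| by
        convert hf x (mem_insert_self x s) i (mem_insert_of_mem hi) using 1; ring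
    calc (∑ i ∈ insert x s, f i) ^ 2
        = f x ^ 2 + 2 * f x * ∑ i ∈ s, f i + (∑ i ∈ s, f i) ^ 2 := by rw [sum_insert hx, add_sq]
      _ ≤ f x ^ 2 + (#s • f x ^ 2 + ∑ i ∈ s, f i ^ 2) + #s • ∑ i ∈ s, f i ^ 2 := by gcongr
      _ = #(insert x s) • ∑ i ∈ insert x s, f i ^ 2 := by
        rw [sum_insert hx, card_insert_of_notMem hx, succ_nsmul, nsmul_add]; abel

section SumProdEmbedding

variable {R ι : Type*} [CommRing R] [Fintype ι] (a : ι → R)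

/-- `k!` times the `k`-th elementary symmetric polynomial of the `a i`. -/
noncomputable def sumProdEmbedding (k : ℕ) : R := ∑ e : Fin k ↪ ι, ∏ i, a (e i)

theorem sumProdEmbedding_zero : sumProdEmbedding a 0 = 1 := by simp [sumProdEmbedding]

theorem sum_apply_mul_prod_eq_sum_apply_zero_mul_prod {k : ℕ} (t : Fin (k + 1)) :
    ∑ g : Fin (k + 1) ↪ ι, a (g t) * ∏ i, a (g i)
      = ∑ g : Fin (k + 1) ↪ ι, a (g 0) * ∏ i, a (g i) := by
  refine Fintype.sum_equiv ((Equiv.swap 0 t).embeddingCongr (Equiv.refl ι)) _ _ fun g => ?_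
  simp [Equiv.embeddingCongr_apply, Equiv.prod_comp (Equiv.swap 0 t) (fun i => a (g i))]

variable [DecidableEq ι]

theorem sumProdEmbedding_succ (k : ℕ) :
    sumProdEmbedding a (k + 1)
      = ∑ h : Fin k ↪ ι, (∑ b ∈ (univ.image h)ᶜ, a b) * ∏ i, a (h i) := by
  rw [sumProdEmbedding, Fintype.sum_embedding_fin_succ (fun f => ∏ i, a (f i))]
  simp [Fin.prod_univ_succ, sum_mul]

theorem sumProdEmbedding_one : sumProdEmbedding a 1 = ∑ i, a i := by
  simp [sumProdEmbedding_succ]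

theorem sumProdEmbedding_add_two (k : ℕ) :
    sumProdEmbedding a (k + 2) = ∑ h : Fin k ↪ ι,
      ((∑ b ∈ (univ.image h)ᶜ, a b) ^ 2 - ∑ b ∈ (univ.image h)ᶜ, a b ^ 2) * ∏ i, a (h i) := by
  rw [sumProdEmbedding_succ, Fintype.sum_embedding_fin_succ
    (fun f => (∑ b ∈ (univ.image f)ᶜ, a b) * ∏ i, a (f i))]
  refine Fintype.sum_congr _ _ fun h => ?_
  have hpair : ∑ c ∈ (univ.image h)ᶜ, (∑ b ∈ ((univ.image h)ᶜ).erase c, a b) * a c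
      = (∑ b ∈ (univ.image h)ᶜ, a b) ^ 2 - ∑ b ∈ (univ.image h)ᶜ, a b ^ 2 := by
    calc _ = ∑ c ∈ (univ.image h)ᶜ, ((∑ b ∈ (univ.image h)ᶜ, a b) - a c) * a c :=
          sum_congr rfl fun c hc => by rw [sum_erase_eq_sub hc]
      _ = _ := by rw [sq, mul_sum, ← sum_sub_distrib]; simp only [sub_mul, sq]
  simp_rw [Fin.univ_image_cons, compl_insert, Fin.prod_univ_succ, Fin.cons_zero, Fin.cons_succ]
  rw [← hpair, sum_mul]
  exact sum_congr rfl fun c _ => by ring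

theorem sum_apply_zero_mul_prod (k : ℕ) :
    ∑ g : Fin (k + 1) ↪ ι, a (g 0) * ∏ i, a (g i)
      = ∑ h : Fin k ↪ ι, (∑ b ∈ (univ.image h)ᶜ, a b ^ 2) * ∏ i, a (h i) := by
  rw [Fintype.sum_embedding_fin_succ (fun f => a (f 0) * ∏ i, a (f i))]
  simp [Fin.prod_univ_succ, sum_mul, sq, mul_assoc]

theorem sum_mul_sumProdEmbedding_succ (k : ℕ) :
    (∑ i, a i) * sumProdEmbedding a (k + 1)
      = sumProdEmbedding a (k + 2) + (k + 1) • ∑ g : Fin (k + 1) ↪ ι, a (g 0) * ∏ i, a (g i) := by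
  have hsplit (g : Fin (k + 1) ↪ ι) : ∑ i, a i = ∑ b ∈ (univ.image g)ᶜ, a b + ∑ t, a (g t) := by
    rw [← sum_compl_add_sum (univ.image g), sum_image g.injective.injOn]
  calc (∑ i, a i) * sumProdEmbedding a (k + 1)
      = ∑ g : Fin (k + 1) ↪ ι, (∑ b ∈ (univ.image g)ᶜ, a b) * ∏ i, a (g i)
        + ∑ t, ∑ g : Fin (k + 1) ↪ ι, a (g t) * ∏ i, a (g i) := by
        rw [sumProdEmbedding, mul_sum, sum_comm, ← sum_add_distrib]
        refine sum_congr rfl fun g _ => ?_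
        rw [hsplit g, add_mul, sum_mul, sum_mul]
    _ = _ := by simp [sumProdEmbedding_succ, sum_apply_mul_prod_eq_sum_apply_zero_mul_prod]

variable [PartialOrder R] [IsOrderedRing R] {a}

theorem sumProdEmbedding_add_two_add_le (ha : ∀ i, 0 ≤ a i)
    (hsq : ∀ i j, 0 ≤ (a i - a j) ^ 2) (k : ℕ) :
    sumProdEmbedding a (k + 2) + ∑ g : Fin (k + 1) ↪ ι, a (g 0) * ∏ i, a (g i)
      ≤ (Fintype.card ι - k) • ∑ g : Fin (k + 1) ↪ ι, a (g 0) * ∏ i, a (g i) := by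
  rw [sumProdEmbedding_add_two, sum_apply_zero_mul_prod, smul_sum, ← sum_add_distrib]
  refine sum_le_sum fun h _ => ?_
  have hcard : #(univ.image h)ᶜ = Fintype.card ι - k := by
    rw [card_compl, card_image_of_injective _ h.injective, card_univ, Fintype.card_fin]
  rw [sub_mul, sub_add_cancel, ← smul_mul_assoc, ← hcard]
  exact mul_le_mul_of_nonneg_right (sq_sum_le_card_nsmul_sum_sq _ a fun i _ j _ => hsq i j)
    (prod_nonneg fun _ _ => ha _)

theorem card_nsmul_sumProdEmbedding_succ_le (ha : ∀ i, 0 ≤ a i)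
    (hsq : ∀ i j, 0 ≤ (a i - a j) ^ 2) {k : ℕ} (hk : k + 1 ≤ Fintype.card ι) :
    Fintype.card ι • sumProdEmbedding a (k + 1)
      ≤ (Fintype.card ι - k) • ((∑ i, a i) * sumProdEmbedding a k) := by
  cases k with
  | zero => simp [sumProdEmbedding_one, sumProdEmbedding_zero]
  | succ k =>
    set Q := ∑ g : Fin (k + 1) ↪ ι, a (g 0) * ∏ i, a (g i)
    have hP : sumProdEmbedding a (k + 2) ≤ (Fintype.card ι - (k + 1)) • Q := by
      have := sumProdEmbedding_add_two_add_le ha hsq k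
      rwa [show Fintype.card ι - k = (Fintype.card ι - (k + 1)) + 1 by omega, succ_nsmul,
        add_le_add_iff_right] at this
    calc Fintype.card ι • sumProdEmbedding a (k + 2)
        = (Fintype.card ι - (k + 1)) • sumProdEmbedding a (k + 2)
          + (k + 1) • sumProdEmbedding a (k + 2) := by
          rw [← add_nsmul, Nat.sub_add_cancel (by omega : k + 1 ≤ Fintype.card ι)]
      _ ≤ (Fintype.card ι - (k + 1)) • sumProdEmbedding a (k + 2)
          + (k + 1) • (Fintype.card ι - (k + 1)) • Q := by gcongr
      _ = (Fintype.card ι - (k + 1)) • ((∑ i, a i) * sumProdEmbedding a (k + 1)) := by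
          rw [sum_mul_sumProdEmbedding_succ, smul_add, smul_comm]

theorem card_pow_nsmul_sumProdEmbedding_le (ha : ∀ i, 0 ≤ a i)
    (hsq : ∀ i j, 0 ≤ (a i - a j) ^ 2) {k : ℕ} (hk : k ≤ Fintype.card ι) :
    Fintype.card ι ^ k • sumProdEmbedding a k
      ≤ (Fintype.card ι).descFactorial k • (∑ i, a i) ^ k := by
  induction k with
  | zero => simp [sumProdEmbedding_zero]
  | succ k ih =>
    have hs : 0 ≤ ∑ i, a i := sum_nonneg fun i _ => ha i
    calc Fintype.card ι ^ (k + 1) • sumProdEmbedding a (k + 1)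
        = Fintype.card ι ^ k • Fintype.card ι • sumProdEmbedding a (k + 1) := by
          rw [pow_succ, mul_comm, mul_nsmul]
      _ ≤ Fintype.card ι ^ k • (Fintype.card ι - k) • ((∑ i, a i) * sumProdEmbedding a k) := by
          gcongr Fintype.card ι ^ k • ?_; exact card_nsmul_sumProdEmbedding_succ_le ha hsq hk
      _ = (Fintype.card ι - k) • ((∑ i, a i) * (Fintype.card ι ^ k • sumProdEmbedding a k)) := by
          rw [smul_comm, mul_smul_comm]
      _ ≤ (Fintype.card ι - k)
          • ((∑ i, a i) * ((Fintype.card ι).descFactorial k • (∑ i, a i) ^ k)) := by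
          gcongr (Fintype.card ι - k) • ((∑ i, a i) * ?_); exact ih (by omega)
      _ = (Fintype.card ι).descFactorial (k + 1) • (∑ i, a i) ^ (k + 1) := by
          rw [Nat.descFactorial_succ, mul_smul_comm, mul_nsmul, pow_succ', smul_comm]

end SumProdEmbedding

theorem ContinuousLinearMap.IsPositive.norm_le_norm_of_le {𝕜 E : Type*} [RCLike 𝕜]
    [NormedAddCommGroup E] [InnerProductSpace 𝕜 E] {T S : E →L[𝕜] E} (hT : T.IsPositive)
    (hTS : T ≤ S) : ‖T‖ ≤ ‖S‖ := by
  have hS : S.IsPositive := by simpa using hT.add hTS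
  rw [T.norm_eq_iSup_rayleighQuotient hT.isSymmetric,
    S.norm_eq_iSup_rayleighQuotient hS.isSymmetric]
  refine ciSup_mono S.bddAbove_rayleighQuotient fun x => ?_
  have h0 : 0 ≤ T.rayleighQuotient x := div_nonneg (hT.re_inner_nonneg_left x) (sq_nonneg _)
  have h1 : T.rayleighQuotient x ≤ S.rayleighQuotient x := by
    have := hTS.re_inner_nonneg_left x
    simp only [_root_.sub_apply, inner_sub_left, map_sub, sub_nonneg] at this
    exact div_le_div_of_nonneg_right this (sq_nonneg _)
  rwa [abs_of_nonneg h0, abs_of_nonneg (h0.trans h1)]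

section Loewner

open scoped MatrixOrder ComplexOrder IsMulCommutative

variable {ι 𝕜 : Type*} [Fintype ι] [DecidableEq ι] [RCLike 𝕜]

theorem Matrix.PosSemidef.mul_of_commute {X Y : Matrix ι ι 𝕜} (hX : X.PosSemidef)
    (hY : Y.PosSemidef) (h : Commute X Y) : (X * Y).PosSemidef := by
  have hrY : Commute (CFC.sqrt X) Y := by rw [CFC.sqrt_eq_cfc]; exact h.cfc_nnreal _
  have hrH : (CFC.sqrt X)ᴴ = CFC.sqrt X := (CFC.sqrt_nonneg X).posSemidef.isHermitian.eq
  have : X * Y = CFC.sqrt X * Y * (CFC.sqrt X)ᴴ := by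
    rw [hrH, mul_assoc, ← hrY.eq, ← mul_assoc, CFC.sqrt_mul_sqrt_self X hX.nonneg]
  rw [this]; exact hY.mul_mul_conjTranspose_same _

theorem Matrix.PosSemidef.list_prod {l : List (Matrix ι ι 𝕜)} (hl : ∀ X ∈ l, X.PosSemidef)
    (hc : l.Pairwise Commute) : l.prod.PosSemidef := by
  induction l with
  | nil => exact PosSemidef.one
  | cons X l ih =>
    rw [List.pairwise_cons] at hc
    rw [List.prod_cons]
    exact (hl X (by simp)).mul_of_commute (ih (fun Y hY => hl Y (by simp [hY])) hc.2)
      (Commute.list_prod_right _ _ hc.1)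

theorem Matrix.isOrderedRing_adjoin {s : Set (Matrix ι ι 𝕜)}
    (hs : ∀ x ∈ s, ∀ y ∈ s, x * y = y * x) : IsOrderedRing (Algebra.adjoin ℝ s) := by
  have := Algebra.isMulCommutative_adjoin ℝ hs
  have : ZeroLEOneClass (Algebra.adjoin ℝ s) := ⟨PosSemidef.one.nonneg⟩
  refine IsOrderedRing.of_mul_nonneg fun x y hx hy => ?_
  exact (PosSemidef.mul_of_commute (nonneg_iff_posSemidef.mp hx)
    (nonneg_iff_posSemidef.mp hy) (congrArg Subtype.val (mul_comm x y))).nonneg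

theorem Matrix.isPositive_toEuclideanCLM_iff {X : Matrix ι ι 𝕜} :
    (toEuclideanCLM (𝕜 := 𝕜) X).IsPositive ↔ X.PosSemidef :=
  (LinearMap.isPositive_toContinuousLinearMap_iff _).trans isPositive_toEuclideanLin_iff

theorem Matrix.norm_toEuclideanCLM_le_of_le {X Y : Matrix ι ι 𝕜} (hX : X.PosSemidef)
    (hXY : X ≤ Y) : ‖toEuclideanCLM (𝕜 := 𝕜) X‖ ≤ ‖toEuclideanCLM (𝕜 := 𝕜) Y‖ :=
  (isPositive_toEuclideanCLM_iff.mpr hX).norm_le_norm_of_le <| by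
    rw [ContinuousLinearMap.le_def, ← map_sub, isPositive_toEuclideanCLM_iff]; exact hXY

variable {n k : ℕ} {A : Fin n → Matrix ι ι 𝕜}

theorem Matrix.nsmul_sum_embedding_prod_le (hA : ∀ i, (A i).PosSemidef)
    (hcomm : ∀ i j, A i * A j = A j * A i) (hk : k ≤ n) :
    n ^ k • ∑ e : Fin k ↪ Fin n, (List.ofFn fun i => A (e i)).prod
      ≤ n.descFactorial k • (∑ i, A i) ^ k := by
  have hs : ∀ x ∈ Set.range A, ∀ y ∈ Set.range A, x * y = y * x := by
    rintro _ ⟨i, rfl⟩ _ ⟨j, rfl⟩; exact hcomm i j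
  have := Algebra.isMulCommutative_adjoin ℝ hs
  have := isOrderedRing_adjoin hs
  let a : Fin n → Algebra.adjoin ℝ (Set.range A) := fun i => ⟨A i, Algebra.subset_adjoin ⟨i, rfl⟩⟩
  have hsq (i j : Fin n) : 0 ≤ (a i - a j) ^ 2 := by
    have h : Subtype.val ((a i - a j) ^ 2) = (A i - A j)ᴴ * (A i - A j) := by
      simp [a, sq, ((hA i).1.sub (hA j).1).eq]
    rw [← Subtype.coe_le_coe, ZeroMemClass.coe_zero, h]
    exact (posSemidef_conjTranspose_mul_self _).nonneg
  have key := Subtype.coe_le_coe.mpr <| card_pow_nsmul_sumProdEmbedding_le (a := a)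
    (fun i => (hA i).nonneg) hsq (by simpa using hk)
  simpa [sumProdEmbedding, ← List.prod_ofFn, a, Function.comp_def] using key

theorem Matrix.smul_sum_embedding_prod_le (hA : ∀ i, (A i).PosSemidef)
    (hcomm : ∀ i j, A i * A j = A j * A i) (hk : k ≤ n) :
    (((n - k).factorial : ℝ) / n.factorial) • ∑ e : Fin k ↪ Fin n, (List.ofFn fun i => A (e i)).prod
      ≤ ((n : ℝ)⁻¹ • ∑ i, A i) ^ k := by
  have hnk : (n : ℝ) ^ k ≠ 0 := by
    rcases Nat.eq_zero_or_pos n with rfl | hn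
    · simp [Nat.le_zero.mp hk]
    · positivity
  have hfac : ((n - k).factorial : ℝ) * n.descFactorial k = n.factorial := by
    exact_mod_cast Nat.factorial_mul_descFactorial hk
  have key := smul_le_smul_of_nonneg_left (nsmul_sum_embedding_prod_le hA hcomm hk)
    (by positivity : (0 : ℝ) ≤ ((n - k).factorial : ℝ) / n.factorial / (n : ℝ) ^ k)
  rw [← Nat.cast_smul_eq_nsmul ℝ, ← Nat.cast_smul_eq_nsmul ℝ, smul_smul, smul_smul] at key
  convert key using 2
  · push_cast; field_simp
  · rw [smul_pow, inv_pow]; congr 1; field_simp; exact hfac.symm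

end Loewner

/-- If `A₁, …, Aₙ` are pairwise commuting positive semidefinite matrices, then the
operator norm of the without-replacement average of ordered products of `k` distinct
matrices is at most the operator norm of `((1/n) Σᵢ Aᵢ) ^ k`. -/
theorem commuting_amgm (n d k : ℕ) (hk : k ≤ n) (A : Fin n → Matrix (Fin d) (Fin d) ℝ)
    (hA : ∀ i, (A i).PosSemidef) (hcomm : ∀ i j, A i * A j = A j * A i) :
    opNorm ((((n - k).factorial : ℝ) / (n.factorial : ℝ)) •
        ∑ j ∈ Finset.univ.filter (fun j : Fin k → Fin n => Function.Injective j),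
          (List.ofFn fun i => A (j i)).prod) ≤
      opNorm (((n : ℝ)⁻¹ • ∑ i, A i) ^ k) := by
  rw [sum_filter_injective]
  have hprod (e : Fin k ↪ Fin n) : (List.ofFn fun i => A (e i)).prod.PosSemidef :=
    PosSemidef.list_prod (by simp [hA]) (List.pairwise_ofFn.mpr fun i j _ => hcomm (e i) (e j))
  exact norm_toEuclideanCLM_le_of_le
    ((posSemidef_sum _ fun e _ => hprod e).smul (by positivity))
    (smul_sum_embedding_prod_le hA hcomm hk)
end

section
/- Deterministic worst-case bound: for positive semidefinite d×d matrices A₁,…,Aₙ and any k ≤ n, the operator norm of the without-replacement average of ordered products of k distinct matrices is at most d^k times the operator norm of ((1/n)ΣᵢAᵢ)^k. -/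
/-!
Since `‖A‖ ≤ tr A` for positive semidefinite `A`, each ordered product satisfies
`‖A_{j₁} ⋯ A_{j_k}‖ ≤ t_{j₁} ⋯ t_{j_k}` with `tᵢ = tr Aᵢ`. Summed over injective `j` these
give `k! e_k(t)`, so the norm is bounded by the without-replacement average `e_k(t) / C(n, k)`,
which by Maclaurin's inequality is at most `(Σ tᵢ / n) ^ k = (tr S) ^ k` for `S = (1/n) Σ Aᵢ`.
Finally `tr S ≤ d ‖S‖`, and `‖S‖ ^ k = ‖S ^ k‖` since `S` is self-adjoint.

Maclaurin's inequality follows by induction from `(m + 1) n e_{m+1} ≤ (n - m) e₁ e_m`, which is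
Chebyshev's sum inequality for the similarly ordered families `tᵢ` and
`tᵢ e_{m-1}(t without i)`.
-/

open Matrix Finset

open scoped Nat Matrix.Norms.L2Operator

namespace Finset

variable {ι R : Type*}

def esymm [CommSemiring R] (s : Finset ι) (t : ι → R) (m : ℕ) : R :=
  ∑ T ∈ s.powersetCard m, ∏ i ∈ T, t i

section CommSemiring

variable [CommSemiring R] (t : ι → R)

@[simp]
lemma esymm_zero (s : Finset ι) : s.esymm t 0 = 1 := by
  simp [esymm]

@[simp]
lemma esymm_empty_succ (m : ℕ) : (∅ : Finset ι).esymm t (m + 1) = 0 := by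
  rw [esymm, powersetCard_eq_empty.2 (by simp), sum_empty]

variable [DecidableEq ι]

lemma esymm_insert_succ {a : ι} {s : Finset ι} (ha : a ∉ s) (m : ℕ) :
    (insert a s).esymm t (m + 1) = s.esymm t (m + 1) + t a * s.esymm t m := by
  rw [esymm, powersetCard_succ_insert ha, sum_union, sum_image, esymm, esymm, mul_sum]
  · congr 1
    refine sum_congr rfl fun T hT => prod_insert fun haT => ha ?_
    exact (mem_powersetCard.1 hT).1 haT
  · intro T hT U hU h
    have hnot : ∀ {V}, V ∈ (s.powersetCard m : Set (Finset ι)) → a ∉ V :=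
      fun hV haV => ha ((mem_powersetCard.1 hV).1 haV)
    rw [← erase_insert (hnot hT), ← erase_insert (hnot hU), h]
  · refine disjoint_left.2 fun T hT hT' => ?_
    obtain ⟨U, -, rfl⟩ := mem_image.1 hT'
    exact ha ((mem_powersetCard.1 hT).1 (mem_insert_self a U))

lemma esymm_succ_of_mem {i : ι} {s : Finset ι} (hi : i ∈ s) (m : ℕ) :
    s.esymm t (m + 1) = (s.erase i).esymm t (m + 1) + t i * (s.erase i).esymm t m := by
  conv_lhs => rw [← insert_erase hi]
  exact esymm_insert_succ t (notMem_erase i s) m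

lemma succ_mul_esymm_succ (s : Finset ι) (m : ℕ) :
    ((m + 1 : ℕ) : R) * s.esymm t (m + 1) = ∑ i ∈ s, t i * (s.erase i).esymm t m := by
  induction s using Finset.induction_on generalizing m with
  | empty => simp
  | insert a s ha ih =>
    have herase : ∀ i ∈ s, (insert a s).erase i = insert a (s.erase i) := fun i hi =>
      erase_insert_of_ne fun hai => ha (hai ▸ hi)
    rw [sum_insert ha, erase_insert ha, sum_congr rfl fun i hi => by rw [herase i hi],
      esymm_insert_succ t ha]
    cases m with
    | zero =>
      have h0 := ih 0
      simp only [zero_add, Nat.cast_one, one_mul, esymm_zero, mul_one] at h0 ⊢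
      rw [h0, add_comm]
    | succ p =>
      simp_rw [esymm_insert_succ t (notMem_mono (erase_subset _ s) ha), mul_add, sum_add_distrib,
        ← ih (p + 1), mul_left_comm (t _) (t a), ← mul_sum, ← ih p]
      push_cast
      ring

end CommSemiring

section Real

variable {t : ι → ℝ}

lemma esymm_nonneg (ht : ∀ i, 0 ≤ t i) (s : Finset ι) (m : ℕ) : 0 ≤ s.esymm t m :=
  sum_nonneg fun _ _ => prod_nonneg fun i _ => ht i

variable [DecidableEq ι]

lemma monovaryOn_mul_esymm_erase (ht : ∀ i, 0 ≤ t i) (s : Finset ι) (m : ℕ) :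
    MonovaryOn t (fun i => t i * (s.erase i).esymm t m) s := by
  intro i hi j hj hlt
  by_contra! htji
  have hij : i ≠ j := fun h => hlt.ne (h ▸ rfl)
  refine hlt.not_ge ?_
  change t j * _ ≤ t i * _
  cases m with
  | zero => simpa using htji.le
  | succ p =>
    have hj_erase : j ∈ s.erase i := mem_erase.2 ⟨hij.symm, hj⟩
    have hi_erase : i ∈ s.erase j := mem_erase.2 ⟨hij, hi⟩
    -- with `r = (s.erase i).erase j`, the two sides differ by `(t i - t j) * r.esymm t (p + 1)`
    rw [esymm_succ_of_mem t hj_erase, esymm_succ_of_mem t hi_erase, erase_right_comm]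
    nlinarith [esymm_nonneg ht ((s.erase i).erase j) (p + 1)]

lemma succ_mul_card_mul_esymm_succ_le (ht : ∀ i, 0 ≤ t i) (s : Finset ι) (m : ℕ) :
    (m + 1) * #s * s.esymm t (m + 1) ≤ (#s - m) * (∑ i ∈ s, t i) * s.esymm t m := by
  cases m with
  | zero =>
    have h := succ_mul_esymm_succ t s 0
    simp only [zero_add, Nat.cast_one, one_mul, esymm_zero, mul_one] at h
    simp [h, mul_comm]
  | succ p =>
    have hcheb := (monovaryOn_mul_esymm_erase ht s p).sum_mul_sum_le_card_mul_sum
    have hg := succ_mul_esymm_succ t s p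
    have hsucc : ((p + 2 : ℕ) : ℝ) * s.esymm t (p + 2) = (∑ i ∈ s, t i) * s.esymm t (p + 1) -
        ∑ i ∈ s, t i * (t i * (s.erase i).esymm t p) := by
      rw [succ_mul_esymm_succ, sum_mul, ← sum_sub_distrib]
      refine sum_congr rfl fun i hi => ?_
      rw [esymm_succ_of_mem t hi]
      ring
    push_cast at hg hsucc ⊢
    linear_combination hcheb + (#s : ℝ) * hsucc + (∑ i ∈ s, t i) * hg

theorem factorial_mul_card_pow_mul_esymm_le (ht : ∀ i, 0 ≤ t i) (s : Finset ι) {k : ℕ}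
    (hk : k ≤ #s) :
    k ! * (#s : ℝ) ^ k * s.esymm t k ≤ (#s).descFactorial k * (∑ i ∈ s, t i) ^ k := by
  induction k with
  | zero => simp
  | succ k ih =>
    have hsum : 0 ≤ ∑ i ∈ s, t i := sum_nonneg fun i _ => ht i
    calc ((k + 1) ! : ℝ) * (#s : ℝ) ^ (k + 1) * s.esymm t (k + 1)
        = k ! * (#s : ℝ) ^ k * ((k + 1) * #s * s.esymm t (k + 1)) := by
          push_cast [Nat.factorial_succ]; ring
      _ ≤ k ! * (#s : ℝ) ^ k * ((#s - k) * (∑ i ∈ s, t i) * s.esymm t k) := by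
          gcongr _ * ?_
          exact succ_mul_card_mul_esymm_succ_le ht s k
      _ = (#s - k) * (∑ i ∈ s, t i) * (k ! * (#s : ℝ) ^ k * s.esymm t k) := by ring
      _ ≤ (#s - k) * (∑ i ∈ s, t i) * ((#s).descFactorial k * (∑ i ∈ s, t i) ^ k) := by
          have : (k : ℝ) ≤ #s := by exact_mod_cast hk.trans' k.le_succ
          exact mul_le_mul_of_nonneg_left (ih (by omega)) (mul_nonneg (sub_nonneg.2 this) hsum)
      _ = (#s).descFactorial (k + 1) * (∑ i ∈ s, t i) ^ (k + 1) := by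
          rw [Nat.descFactorial_succ, Nat.cast_mul, Nat.cast_sub (by omega)]
          ring

end Real

end Finset

section InjectiveSums

variable {ι : Type*} [Fintype ι] [DecidableEq ι]

lemma card_filter_injective_image_eq {k : ℕ} {T : Finset ι} (hT : #T = k) :
    #{j : Fin k → ι | Function.Injective j ∧ univ.image j = T} = k ! := by
  have e : Fin k ≃ T := (T.equivFinOfCardEq hT).symm
  calc #{j : Fin k → ι | Function.Injective j ∧ univ.image j = T}
      = #(univ.image fun σ : Fin k ≃ T => Subtype.val ∘ σ) := by
        congr 1
        ext j
        simp only [mem_filter, mem_univ, true_and, mem_image]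
        constructor
        · rintro ⟨hinj, rfl⟩
          have hbij : Function.Bijective
              fun i => (⟨j i, mem_image_of_mem j (mem_univ i)⟩ : univ.image j) :=
            (Fintype.bijective_iff_injective_and_card _).2
              ⟨fun a b h => hinj (congrArg Subtype.val h),
                by rw [Fintype.card_fin, Fintype.card_coe, hT]⟩
          exact ⟨Equiv.ofBijective _ hbij, rfl⟩
        · rintro ⟨σ, rfl⟩
          refine ⟨Subtype.val_injective.comp σ.injective, ?_⟩
          ext x
          simp only [mem_image, mem_univ, true_and, Function.comp_apply]
          exact ⟨fun ⟨i, hi⟩ => hi ▸ (σ i).2,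
            fun hx => ⟨σ.symm ⟨x, hx⟩, by simp⟩⟩
    _ = Fintype.card (Fin k ≃ T) :=
        card_image_of_injective _ fun σ τ h => Equiv.ext fun i => Subtype.ext (congrFun h i)
    _ = k ! := by rw [Fintype.card_equiv e, Fintype.card_fin]

lemma sum_prod_injective_eq {R : Type*} [CommSemiring R] (t : ι → R) (k : ℕ) :
    ∑ j : Fin k → ι with Function.Injective j, ∏ i, t (j i) = k ! * univ.esymm t k := by
  rw [← sum_fiberwise_of_maps_to (g := fun j : Fin k → ι => univ.image j)
    (t := univ.powersetCard k) fun j hj => ?_, esymm, mul_sum]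
  · refine sum_congr rfl fun T hT => ?_
    rw [filter_filter, sum_congr rfl fun j hj => ?_, sum_const, nsmul_eq_mul,
      card_filter_injective_image_eq (mem_powersetCard.1 hT).2]
    obtain ⟨hinj, rfl⟩ := (mem_filter.1 hj).2
    exact (prod_image fun x _ y _ h => hinj h).symm
  · rw [mem_powersetCard, card_image_of_injective _ (mem_filter.1 hj).2, card_univ,
      Fintype.card_fin]
    exact ⟨subset_univ _, rfl⟩

theorem factorial_div_mul_sum_prod_injective_le {t : ι → ℝ} (ht : ∀ i, 0 ≤ t i) {k : ℕ}
    (hk : k ≤ Fintype.card ι) :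
    ((Fintype.card ι - k)! / (Fintype.card ι)! : ℝ) *
        ∑ j : Fin k → ι with Function.Injective j, ∏ i, t (j i) ≤
      ((Fintype.card ι : ℝ)⁻¹ * ∑ i, t i) ^ k := by
  have hmac := univ.factorial_mul_card_pow_mul_esymm_le ht (k := k) (by rwa [card_univ])
  rw [card_univ] at hmac
  have hfac : ((Fintype.card ι - k)! : ℝ) * (Fintype.card ι).descFactorial k =
      (Fintype.card ι)! := by
    exact_mod_cast Nat.factorial_mul_descFactorial hk
  have hD : (0 : ℝ) < (Fintype.card ι).descFactorial k := by
    exact_mod_cast Nat.descFactorial_pos.2 hk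
  have hpow : (0 : ℝ) < (Fintype.card ι : ℝ) ^ k :=
    hD.trans_le (by exact_mod_cast Nat.descFactorial_le_pow _ _)
  rw [sum_prod_injective_eq, ← hfac, mul_pow, inv_pow, div_mul_cancel_left₀ (by positivity),
    ← div_eq_inv_mul, inv_mul_eq_div, div_le_div_iff₀ hD hpow]
  linarith

end InjectiveSums

section Matrix

variable {n : Type*} [Fintype n] [DecidableEq n]

lemma Matrix.IsHermitian.l2_opNorm_eq_norm_eigenvalues {M : Matrix n n ℝ} (hM : M.IsHermitian) :
    ‖M‖ = ‖hM.eigenvalues‖ := by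
  conv_lhs => rw [hM.spectral_theorem, Unitary.conjStarAlgAut_apply, mul_assoc]
  rw [CStarRing.norm_coe_unitary_mul, ← Unitary.coe_star, CStarRing.norm_mul_coe_unitary,
    l2_opNorm_diagonal]
  rfl

lemma Matrix.PosSemidef.l2_opNorm_le_trace {M : Matrix n n ℝ} (hM : M.PosSemidef) :
    ‖M‖ ≤ M.trace := by
  have hev := hM.eigenvalues_nonneg
  rw [hM.isHermitian.l2_opNorm_eq_norm_eigenvalues, hM.isHermitian.trace_eq_sum_eigenvalues]
  refine (pi_norm_le_iff_of_nonneg (sum_nonneg fun i _ => hev i)).2 fun i => ?_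
  rw [Real.norm_of_nonneg (hev i)]
  exact single_le_sum (fun j _ => hev j) (mem_univ i)

lemma Matrix.IsHermitian.trace_le_card_mul_l2_opNorm {M : Matrix n n ℝ} (hM : M.IsHermitian) :
    M.trace ≤ Fintype.card n * ‖M‖ := by
  rw [hM.trace_eq_sum_eigenvalues, hM.l2_opNorm_eq_norm_eigenvalues, ← nsmul_eq_mul,
    ← card_univ, ← sum_const]
  exact sum_le_sum fun i _ => (le_abs_self _).trans (norm_le_pi_norm hM.eigenvalues i)

end Matrix

theorem IsSelfAdjoint.norm_pow {E : Type*} [NormedRing E] [StarRing E] [CStarRing E]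
    [Nontrivial E] {x : E} (hx : IsSelfAdjoint x) (k : ℕ) : ‖x ^ k‖ = ‖x‖ ^ k := by
  refine (norm_pow_le x k).antisymm ?_
  rcases (norm_nonneg x).eq_or_lt with hx0 | hx0
  · rcases k.eq_zero_or_pos with rfl | hk
    · simp
    · rw [← hx0, zero_pow hk.ne']; exact norm_nonneg _
  obtain ⟨N, hN⟩ : ∃ N, k ≤ 2 ^ N := ⟨k, k.lt_two_pow_self.le⟩
  refine le_of_mul_le_mul_right ?_ (pow_pos hx0 (2 ^ N - k))
  calc ‖x‖ ^ k * ‖x‖ ^ (2 ^ N - k) = ‖x ^ k * x ^ (2 ^ N - k)‖ := by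
        rw [← pow_add, ← pow_add, Nat.add_sub_cancel' hN, hx.norm_pow_two_pow]
    _ ≤ ‖x ^ k‖ * ‖x‖ ^ (2 ^ N - k) :=
        (norm_mul_le _ _).trans (mul_le_mul_of_nonneg_left (norm_pow_le x _) (norm_nonneg _))

theorem norm_sum_prod_ofFn_le {ι E : Type*} [NormedRing E] [NormOneClass E] {k : ℕ}
    (s : Finset (Fin k → ι)) (f : ι → E) :
    ‖∑ j ∈ s, (List.ofFn fun i => f (j i)).prod‖ ≤ ∑ j ∈ s, ∏ i, ‖f (j i)‖ :=
  (norm_sum_le _ _).trans <| sum_le_sum fun j _ =>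
    (List.norm_prod_le _).trans_eq (by rw [List.map_ofFn, List.prod_ofFn]; rfl)

/-- Deterministic worst-case bound: for positive semidefinite `d × d` matrices
`A₁, …, Aₙ` and `k ≤ n`, the operator norm of the without-replacement average of
ordered products of `k` distinct matrices is at most `d ^ k` times the operator norm
of `((1/n) Σᵢ Aᵢ) ^ k`. -/
theorem worst_case_amgm (n d k : ℕ) (hk : k ≤ n) (A : Fin n → Matrix (Fin d) (Fin d) ℝ)
    (hA : ∀ i, (A i).PosSemidef) :
    opNorm ((((n - k).factorial : ℝ) / (n.factorial : ℝ)) •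
        ∑ j ∈ Finset.univ.filter (fun j : Fin k → Fin n => Function.Injective j),
          (List.ofFn fun i => A (j i)).prod) ≤
      (d : ℝ) ^ k * opNorm (((n : ℝ)⁻¹ • ∑ i, A i) ^ k) := by
  simp only [opNorm, l2_opNorm_toEuclideanCLM]
  rcases isEmpty_or_nonempty (Fin d) with hd | hd
  · rw [norm_of_subsingleton]
    positivity
  set S := (n : ℝ)⁻¹ • ∑ i, A i
  have hS : S.PosSemidef := (posSemidef_sum _ fun i _ => hA i).smul (by positivity)
  have htrS : S.trace = (n : ℝ)⁻¹ * ∑ i, (A i).trace := by simp [S, trace_sum]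
  calc _ = ((n - k)! / n ! : ℝ) *
        ‖∑ j : Fin k → Fin n with Function.Injective j,
          (List.ofFn fun i => A (j i)).prod‖ := by
        rw [norm_smul, Real.norm_of_nonneg (by positivity)]
    _ ≤ ((n - k)! / n ! : ℝ) *
        ∑ j : Fin k → Fin n with Function.Injective j, ∏ i, (A (j i)).trace := by
        refine mul_le_mul_of_nonneg_left ((norm_sum_prod_ofFn_le _ _).trans ?_) (by positivity)
        exact sum_le_sum fun j _ =>
          prod_le_prod (fun _ _ => norm_nonneg _) fun i _ => (hA _).l2_opNorm_le_trace
    _ ≤ S.trace ^ k := by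
        simpa [htrS] using factorial_div_mul_sum_prod_injective_le (fun i => (hA i).trace_nonneg)
          (by simpa using hk)
    _ ≤ (d * ‖S‖) ^ k := by
        gcongr
        · exact hS.trace_nonneg
        · simpa using hS.isHermitian.trace_le_card_mul_l2_opNorm
    _ = d ^ k * ‖S ^ k‖ := by rw [mul_pow, hS.isHermitian.isSelfAdjoint.norm_pow]
end
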